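/- Let s ∈ ℂ with Im s < 0 and let λ ∈ ℝ. Then the double integral 2 ∫_{ℝ²} e^{i s τ} e^{−i λ t} e^{−π e^{τ} ( e^{t} + e^{−t} )} dτ dt converges absolutely and equals π^{−(is−iλ)/2} Γ( (is − iλ)/2 ) · π^{−(is+iλ)/2} Γ( (is + iλ)/2 ). -/

import Mathlib

/-!
Set `a = (is - iλ)/2` and `b = (is + iλ)/2`, so that `Re a = Re b = -Im s / 2 > 0`. In the
coordinates `(x, y) = (τ + t, τ - t)` the integrand factors as
`e^{ax - π e^x} · e^{by - π e^y}`, and this change of variables has Jacobian `2`. Each factor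
integrates, after the substitution `u = e^x`, to the Gamma integral
`∫₀^∞ u^{a-1} e^{-π u} du = π^{-a} Γ(a)`.
-/

open MeasureTheory Set

noncomputable def addSubLinearEquiv : (ℝ × ℝ) ≃ₗ[ℝ] ℝ × ℝ where
  toFun p := (p.1 + p.2, p.1 - p.2)
  invFun p := ((p.1 + p.2) / 2, (p.1 - p.2) / 2)
  map_add' p q := by ext <;> simp <;> ring
  map_smul' c p := by ext <;> simp <;> ring
  left_inv p := by ext <;> simp
  right_inv p := by ext <;> simp <;> ring

@[simp] theorem addSubLinearEquiv_apply (p : ℝ × ℝ) :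
    addSubLinearEquiv p = (p.1 + p.2, p.1 - p.2) := rfl

theorem det_addSubLinearEquiv :
    LinearMap.det (addSubLinearEquiv : (ℝ × ℝ) →ₗ[ℝ] ℝ × ℝ) = -2 := by
  rw [← LinearMap.det_toMatrix (Module.Basis.finTwoProd ℝ), Matrix.det_fin_two]
  norm_num [LinearMap.toMatrix_apply]

theorem map_addSubLinearEquiv_volume :
    Measure.map addSubLinearEquiv volume = ENNReal.ofReal 2⁻¹ • (volume : Measure (ℝ × ℝ)) := by
  have h := Measure.map_linearMap_addHaar_eq_smul_addHaar (volume : Measure (ℝ × ℝ))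
    (f := (addSubLinearEquiv : (ℝ × ℝ) →ₗ[ℝ] ℝ × ℝ)) (by rw [det_addSubLinearEquiv]; norm_num)
  rw [det_addSubLinearEquiv] at h
  simpa using h

theorem measurableEmbedding_addSubLinearEquiv : MeasurableEmbedding addSubLinearEquiv :=
  addSubLinearEquiv.toContinuousLinearEquiv.toHomeomorph.measurableEmbedding

section

variable {E : Type*} [NormedAddCommGroup E]

theorem integrable_comp_add_sub_iff {f : ℝ × ℝ → E} :
    Integrable (fun p : ℝ × ℝ ↦ f (p.1 + p.2, p.1 - p.2)) ↔ Integrable f := by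
  change Integrable (f ∘ addSubLinearEquiv) ↔ _
  rw [← measurableEmbedding_addSubLinearEquiv.integrable_map_iff, map_addSubLinearEquiv_volume,
    integrable_smul_measure (by norm_num) ENNReal.ofReal_ne_top]

theorem integral_comp_add_sub [NormedSpace ℝ E] (f : ℝ × ℝ → E) :
    ∫ p : ℝ × ℝ, f (p.1 + p.2, p.1 - p.2) = (2⁻¹ : ℝ) • ∫ p, f p := by
  rw [← ENNReal.toReal_ofReal (inv_nonneg.2 zero_le_two), ← integral_smul_measure,
    ← map_addSubLinearEquiv_volume, measurableEmbedding_addSubLinearEquiv.integral_map]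
  rfl

variable [NormedSpace ℝ E]

theorem integral_comp_exp (g : ℝ → E) :
    ∫ u, Real.exp u • g (Real.exp u) = ∫ y in Ioi 0, g y := by
  simpa [abs_of_pos (Real.exp_pos _)] using
    (integral_image_eq_integral_abs_deriv_smul MeasurableSet.univ
      (fun u _ ↦ (Real.hasDerivAt_exp u).hasDerivWithinAt) Real.exp_injective.injOn g).symm

theorem integrable_comp_exp_iff (g : ℝ → E) :
    Integrable (fun u ↦ Real.exp u • g (Real.exp u)) ↔ IntegrableOn g (Ioi 0) := by
  simpa [abs_of_pos (Real.exp_pos _)] using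
    (integrableOn_image_iff_integrableOn_abs_deriv_smul MeasurableSet.univ
      (fun u _ ↦ (Real.hasDerivAt_exp u).hasDerivWithinAt) Real.exp_injective.injOn g).symm

end

namespace Complex

/-- The Gamma integrand `t ^ (a - 1) * exp (-(r * t)) dt` in the variable `u = log t`. -/
noncomputable def expGammaIntegrand (a : ℂ) (r u : ℝ) : ℂ :=
  exp (a * u) * exp (-(r * Real.exp u))

theorem integrableOn_cpow_mul_exp_neg_mul_Ioi {a : ℂ} (ha : 0 < a.re) {r : ℝ} (hr : 0 < r) :
    IntegrableOn (fun t : ℝ ↦ (t : ℂ) ^ (a - 1) * exp (-(r * t))) (Ioi 0) := by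
  refine Integrable.of_integral_ne_zero ?_
  rw [integral_cpow_mul_exp_neg_mul_Ioi ha hr]
  exact mul_ne_zero (by simp [hr.ne']) (Gamma_ne_zero_of_re_pos ha)

theorem expGammaIntegrand_eq_smul (a : ℂ) (r u : ℝ) :
    expGammaIntegrand a r u =
      Real.exp u • ((Real.exp u : ℂ) ^ (a - 1) * exp (-(r * (Real.exp u : ℝ)))) := by
  have hlog : log (Real.exp u) = u := by
    rw [ofReal_exp, log_exp (by simp [Real.pi_pos]) (by simp [Real.pi_pos.le])]
  rw [expGammaIntegrand, ← smul_mul_assoc, real_smul,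
    cpow_def_of_ne_zero (ofReal_ne_zero.2 (Real.exp_ne_zero u)), hlog, ofReal_exp]
  simp only [← exp_add]
  ring_nf

theorem integrable_expGammaIntegrand {a : ℂ} (ha : 0 < a.re) {r : ℝ} (hr : 0 < r) :
    Integrable (expGammaIntegrand a r) := by
  rw [funext (expGammaIntegrand_eq_smul a r)]
  exact (integrable_comp_exp_iff _).2 (integrableOn_cpow_mul_exp_neg_mul_Ioi ha hr)

theorem integral_expGammaIntegrand {a : ℂ} (ha : 0 < a.re) {r : ℝ} (hr : 0 < r) :
    ∫ u, expGammaIntegrand a r u = (r : ℂ) ^ (-a) * Gamma a := by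
  simp_rw [expGammaIntegrand_eq_smul]
  rw [integral_comp_exp (fun t : ℝ ↦ (t : ℂ) ^ (a - 1) * exp (-(r * t))),
    integral_cpow_mul_exp_neg_mul_Ioi ha hr, one_div,
    inv_cpow _ _ (by simp [arg_ofReal_of_nonneg hr.le, Real.pi_ne_zero.symm]), cpow_neg]

theorem exp_mul_exp_mul_exp_neg_mul_exp_eq (a b : ℂ) (r τ t : ℝ) :
    exp ((a + b) * τ) * exp ((a - b) * t) *
        (Real.exp (-r * Real.exp τ * (Real.exp t + Real.exp (-t))) : ℂ) =
      expGammaIntegrand a r (τ + t) * expGammaIntegrand b r (τ - t) := by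
  simp only [expGammaIntegrand, ofReal_exp, ← exp_add]
  push_cast
  congr 1
  simp only [sub_eq_add_neg, exp_add]
  ring

end Complex

open Complex

theorem SO2_baxter_double_integral (s : ℂ) (hs : s.im < 0) (lam : ℝ) :
    Integrable (fun p : ℝ × ℝ =>
      Complex.exp (Complex.I * s * p.1) * Complex.exp (-Complex.I * lam * p.2) *
        Real.exp (-Real.pi * Real.exp p.1 * (Real.exp p.2 + Real.exp (-p.2)))) ∧
    2 * (∫ p : ℝ × ℝ,
        Complex.exp (Complex.I * s * p.1) * Complex.exp (-Complex.I * lam * p.2) *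
          Real.exp (-Real.pi * Real.exp p.1 * (Real.exp p.2 + Real.exp (-p.2))))
    = (Real.pi : ℂ) ^ (-(Complex.I * s - Complex.I * lam)/2) *
        Complex.Gamma ((Complex.I * s - Complex.I * lam)/2) *
      ((Real.pi : ℂ) ^ (-(Complex.I * s + Complex.I * lam)/2) *
        Complex.Gamma ((Complex.I * s + Complex.I * lam)/2)) := by
  rw [neg_div, neg_div]
  set a := (I * s - I * lam) / 2
  set b := (I * s + I * lam) / 2
  have ha : 0 < a.re := by simpa [a] using hs
  have hb : 0 < b.re := by simpa [b] using hs
  have hsum : I * s = a + b := by simp only [a, b]; ring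
  have hdiff : -I * lam = a - b := by simp only [a, b]; ring
  simp only [hsum, hdiff, exp_mul_exp_mul_exp_neg_mul_exp_eq a b Real.pi]
  refine ⟨integrable_comp_add_sub_iff.2 <|
    (integrable_expGammaIntegrand ha Real.pi_pos).mul_prod
      (integrable_expGammaIntegrand hb Real.pi_pos), ?_⟩
  rw [integral_comp_add_sub fun q ↦ expGammaIntegrand a Real.pi q.1 * expGammaIntegrand b Real.pi q.2,
    Measure.volume_eq_prod, integral_prod_mul, integral_expGammaIntegrand ha Real.pi_pos,
    integral_expGammaIntegrand hb Real.pi_pos, real_smul]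
  push_cast
  ring
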